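/- arXiv:2406.12636 — 3 statements merged into one kernel-verified Lean document; each statement's English description precedes it below -/
import Mathlib

section
/- If tournament (S,P) is not manipulable by any team (for instance, if (S,P) is a knockout tournament where a worse performance can never change the winner while preserving one's own rank), then the tournament system W = [(S,P),(T,Q),(U,R)] with allocation rule 𝒜′ is incentive compatible. -/
/-- A tournament system `W = [(S,P),(T,Q),(U,R)]` in the sense of the paper:
ranking methods `P`, `Q`, `R` assign natural-number ranks to teams for any set of
results; `worseS i s s'` (resp. `worseT`) means that results `s'` coincide with `s`
except for a strictly worse performance by team `i`.  The winner `p` of `(S,P)`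
also plays in `(T,Q)` but not in `(U,R)`; the winner `r` of `(U,R)` does not play
in `(T,Q)`.  The top `q` teams of `(T,Q)` receive direct slots. -/
structure System (Team ResS ResT ResU : Type) : Type where
  P : ResS → Team → ℕ
  Q : ResT → Team → ℕ
  R : ResU → Team → ℕ
  worseS : Team → ResS → ResS → Prop
  worseT : Team → ResT → ResT → Prop
  teamsS : Set Team
  teamsT : Set Team
  teamsU : Set Team
  S : ResS
  T : ResT
  U : ResU
  q : ℕ
  p : Team
  r : Team
  hp_win : P S p = 1
  hp_T : p ∈ teamsT
  hp_notU : p ∉ teamsU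
  hr_win : R U r = 1
  hr_U : r ∈ teamsU
  hr_notT : r ∉ teamsT

namespace System

variable {Team ResS ResT ResU : Type} (W : System Team ResS ResT ResU)

/-- The ranking methods are linear orders on the participants. -/
def linearRanked : Prop :=
  (∀ s, Set.InjOn (W.P s) W.teamsS) ∧ (∀ t, Set.InjOn (W.Q t) W.teamsT)

/-- The current UEFA allocation rule `𝒜`: the top `q` of `(T,Q)` qualify; moreover,
if the winner `w` of `(S,P)` has `Q_w(T) ≥ q+1` it qualifies itself; if
`Q_w(T) ≤ q−1` the vacancy goes to `r`; if `Q_w(T) = q` it goes to the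
`(q+1)`-th ranked team of `(T,Q)`. -/
def qualA (s : ResS) (t : ResT) : Set Team :=
  {i | (i ∈ W.teamsT ∧ W.Q t i ≤ W.q) ∨
    ∃ w, W.P s w = 1 ∧
      ((W.q + 1 ≤ W.Q t w ∧ i = w) ∨
       (W.Q t w + 1 ≤ W.q ∧ i = W.r) ∨
       (W.Q t w = W.q ∧ i ∈ W.teamsT ∧ W.Q t i = W.q + 1))}

/-- The modified rule `𝒜′`: all cases `Q_w(T) ≤ q` are treated uniformly, the
vacancy going to `r`. -/
def qualA' (s : ResS) (t : ResT) : Set Team :=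
  {i | (i ∈ W.teamsT ∧ W.Q t i ≤ W.q) ∨
    ∃ w, W.P s w = 1 ∧
      ((W.q + 1 ≤ W.Q t w ∧ i = w) ∨
       (W.Q t w ≤ W.q ∧ i = W.r))}

/-- The modified rule `𝒜″`: any vacancy created by the winner of `(S,P)` is filled
by the `(q+1)`-th ranked team of `(T,Q)`. -/
def qualA'' (s : ResS) (t : ResT) : Set Team :=
  {i | (i ∈ W.teamsT ∧ W.Q t i ≤ W.q) ∨
    ∃ w, W.P s w = 1 ∧
      ((W.q + 1 ≤ W.Q t w ∧ i = w) ∨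
       (W.Q t w ≤ W.q ∧ i ∈ W.teamsT ∧ W.Q t i = W.q + 1))}

/-- Definition 1: tournament `(S,P)` is manipulable by team `i`, making team `j`
the winner: some worse performance `s'` of `i` keeps `i`'s rank and promotes `j`
(originally ranked at least 2) to rank 1. -/
def manipSBy (i j : Team) : Prop :=
  ∃ s', W.worseS i W.S s' ∧ W.P W.S i = W.P s' i ∧
    2 ≤ W.P W.S j ∧ W.P s' j = 1

/-- A witness `t'` of a Definition-2 manipulation of `(T,Q)` by team `i` (ranked
`q+1` before and after), swapping teams `j` (rank `q−1 → q`) and `k`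
(rank `q → q−1`), all other ranks unchanged. -/
def manipTWitness (i j k : Team) (t' : ResT) : Prop :=
  W.worseT i W.T t' ∧
  W.Q W.T i = W.q + 1 ∧ W.Q t' i = W.q + 1 ∧
  W.Q W.T j + 1 = W.q ∧ W.Q t' j = W.q ∧
  W.Q W.T k = W.q ∧ W.Q t' k + 1 = W.q ∧
  (∀ m, m ≠ j → m ≠ k → W.Q W.T m = W.Q t' m)

/-- Definition 2: tournament `(T,Q)` is manipulable by team `i`, swapping `j` and `k`. -/
def manipTBy (i j k : Team) : Prop := ∃ t', W.manipTWitness i j k t'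

/-- Some team gains a qualification slot it would not otherwise obtain via a
Definition-1 manipulation of `(S,P)`. -/
def incompatibleS (qual : ResS → ResT → Set Team) : Prop :=
  ∃ i j s', W.worseS i W.S s' ∧ W.P W.S i = W.P s' i ∧
    2 ≤ W.P W.S j ∧ W.P s' j = 1 ∧
    i ∉ qual W.S W.T ∧ i ∈ qual s' W.T

/-- Some team gains a qualification slot it would not otherwise obtain via a
Definition-2 manipulation of `(T,Q)`.  (The ranking of the coefficient-based
tournament `(U,R)` cannot be improved by worse performance, so `(U,R)` is not
manipulable.) -/
def incompatibleT (qual : ResS → ResT → Set Team) : Prop :=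
  ∃ i j k t', W.manipTWitness i j k t' ∧
    i ∉ qual W.S W.T ∧ i ∈ qual W.S t'

/-- Incentive incompatibility of the tournament system under allocation rule `qual`:
some team can strictly enlarge its qualification outcome by a worse performance. -/
def incompatible (qual : ResS → ResT → Set Team) : Prop :=
  W.incompatibleS qual ∨ W.incompatibleT qual

end System

namespace System

variable {Team ResS ResT ResU : Type} (W : System Team ResS ResT ResU)

theorem qualA'_congr (s : ResS) {t t' : ResT} (h : ∀ m, W.Q t m ≤ W.q ↔ W.Q t' m ≤ W.q) :
    W.qualA' s t = W.qualA' s t' := by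
  have h' : ∀ m, W.q + 1 ≤ W.Q t m ↔ W.q + 1 ≤ W.Q t' m := fun m => by
    have := h m; omega
  ext i
  simp only [qualA', Set.mem_ofPred_eq, h, h']

/-- Both teams swapped by a Definition-2 manipulation are ranked at most `q` before and after. -/
theorem manipTWitness.Q_le_iff {W : System Team ResS ResT ResU} {i j k : Team} {t' : ResT}
    (hw : W.manipTWitness i j k t') (m : Team) : W.Q t' m ≤ W.q ↔ W.Q W.T m ≤ W.q := by
  obtain ⟨-, -, -, hjT, hjt', hkT, hkt', hother⟩ := hw
  by_cases hj : m = j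
  · subst hj; omega
  by_cases hk : m = k
  · subst hk; omega
  rw [hother m hj hk]

theorem not_incompatibleS_of_not_manipSBy (qual : ResS → ResT → Set Team)
    (hS : ∀ i j, ¬ W.manipSBy i j) : ¬ W.incompatibleS qual :=
  fun ⟨i, j, s', hworse, hrank, hj, hwin, _⟩ => hS i j ⟨s', hworse, hrank, hj, hwin⟩

theorem not_incompatibleT_qualA' : ¬ W.incompatibleT W.qualA' := by
  rintro ⟨i, j, k, t', hw, hnot, hin⟩
  rw [W.qualA'_congr W.S hw.Q_le_iff] at hin
  exact hnot hin

end System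

theorem statement5_general {Team ResS ResT ResU : Type} (W : System Team ResS ResT ResU)
    (hS : ∀ i j, ¬ W.manipSBy i j) :
    ¬ W.incompatible W.qualA' := by
  rintro (hinc | hinc)
  · exact W.not_incompatibleS_of_not_manipSBy W.qualA' hS hinc
  · exact W.not_incompatibleT_qualA' hinc

/-- if `(S,P)` is not manipulable by any team (e.g. a knockout
tournament), then the system with rule `𝒜′` is incentive compatible. -/
theorem statement5 {Team ResS ResT ResU : Type} (W : System Team ResS ResT ResU)
    (hlin : W.linearRanked) (hS : ∀ i j, ¬ W.manipSBy i j) :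
    ¬ W.incompatible W.qualA' :=
  statement5_general W hS
end

section
/- Under allocation rule 𝒜 (the current UEFA rule), the qualified set as a function of the rank Q_p(T) of the titleholder p is not monotone in the following sense: the winner r of (U,R) qualifies when Q_p(T) ≤ q−1 but does not qualify when Q_p(T) = q, even though in both cases p occupies a slot among the top q of (T,Q); consequently the identity of the beneficiary of the vacancy changes discontinuously at Q_p(T) = q. -/
namespace System

variable {Team ResS ResT ResU : Type} (W : System Team ResS ResT ResU)

theorem r_mem_qualA_of_winner_lt {s : ResS} {t : ResT} {w : Team} (hw : W.P s w = 1)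
    (h : W.Q t w + 1 ≤ W.q) : W.r ∈ W.qualA s t :=
  Or.inr ⟨w, hw, Or.inr (Or.inl ⟨h, rfl⟩)⟩

theorem r_not_mem_qualA_of_forall_winner_eq {s : ResS} {t : ResT}
    (h : ∀ w, W.P s w = 1 → W.Q t w = W.q) : W.r ∉ W.qualA s t := by
  rintro (⟨hrT, -⟩ | ⟨w, hw, ⟨hgt, -⟩ | ⟨hlt, -⟩ | ⟨-, hrT, -⟩⟩)
  · exact W.hr_notT hrT
  · have := h w hw; omega
  · have := h w hw; omega
  · exact W.hr_notT hrT

end System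

def titleholderExample : System ℕ ℕ Bool ℕ where
  P _ i := i + 1
  Q b i := if i = 0 then (if b then 1 else 2) else i + 1
  R _ i := i
  worseS _ _ _ := True
  worseT _ _ _ := True
  teamsS := Set.univ
  teamsT := {0, 2, 3}
  teamsU := {1}
  S := 0
  T := true
  U := 0
  q := 2
  p := 0
  r := 1
  hp_win := rfl
  hp_T := by simp
  hp_notU := by simp
  hr_win := rfl
  hr_U := by simp
  hr_notT := by simp

/-- under the UEFA rule `𝒜`, the qualified set is not monotone in
the rank `Q_p(T)` of the titleholder `p`: there are rankings `t`, `t'` of `(T,Q)`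
differing only in the position of `p` (`Q_p(t) = q−1` versus `Q_p(t') = q`) such
that `r` qualifies under `t` but not under `t'`. -/
theorem statement8 :
    ∃ (Team ResS ResT ResU : Type) (W : System Team ResS ResT ResU) (t t' : ResT),
      W.Q t W.p + 1 = W.q ∧ W.Q t' W.p = W.q ∧
      (∀ m, m ≠ W.p → W.Q t m = W.Q t' m) ∧
      W.r ∈ W.qualA W.S t ∧ W.r ∉ W.qualA W.S t' := by
  refine ⟨_, _, _, _, titleholderExample, true, false, rfl, rfl,
    fun m (hm : m ≠ 0) => by simp [titleholderExample, hm],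
    titleholderExample.r_mem_qualA_of_winner_lt titleholderExample.hp_win le_rfl,
    titleholderExample.r_not_mem_qualA_of_forall_winner_eq ?_⟩
  rintro w (hw : w + 1 = 1)
  obtain rfl := Nat.succ_injective hw
  rfl
end

section
/- In a round-robin tournament with at least three teams ranked by points (win = 3, draw = 1, loss = 0, ties broken by a fixed strict priority), there exists a set of results and a team i such that i can deliberately lose one of its matches, keep its own final rank unchanged, and thereby reverse the final ranks of two teams both ranked strictly above i. -/
open Finset

/-!
Start from the transitive tournament on `m + 3` teams in which the smaller index always wins,
then let `1` beat `0` and the last team beat `1`. Teams `0` and `1` tie on `3(m + 1)` points and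
head the table, `0` first on the tie-break (for `m = 0` all three teams tie); the last team, with
`3` points, is ranked last. If the last team throws its win against `1`, then `1` climbs to
`3(m + 2)` points and overtakes `0`, while the last team, now on `0` points, stays last.
-/

/-- Valid results of a round-robin tournament on `n` teams: each pair of distinct
teams plays exactly one match, awarding points `(3,0)` (win), `(1,1)` (draw) or
`(0,3)` (loss); `pts i j` is the number of points `i` collects from its match
against `j`. -/
def ValidRR {n : ℕ} (pts : Fin n → Fin n → ℕ) : Prop :=
  (∀ i, pts i i = 0) ∧ ∀ i j, i ≠ j →
    ((pts i j = 3 ∧ pts j i = 0) ∨ (pts i j = 1 ∧ pts j i = 1) ∨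
      (pts i j = 0 ∧ pts j i = 3))

/-- Total score of team `i`. -/
def rrScore {n : ℕ} (pts : Fin n → Fin n → ℕ) (i : Fin n) : ℕ := ∑ j, pts i j

/-- Final rank of team `i`: decreasing order of scores, ties broken by the fixed
strict priority given by the order on `Fin n`. -/
def rrRank {n : ℕ} (pts : Fin n → Fin n → ℕ) (i : Fin n) : ℕ :=
  1 + (Finset.univ.filter
        (fun j => rrScore pts i < rrScore pts j ∨
          (rrScore pts j = rrScore pts i ∧ j < i))).card

/-- `pts'` is obtained from `pts` by a deliberate loss of team `i`: exactly one
match of `i` (a win or a draw) is changed to a loss, all other results unchanged. -/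
def DeliberateLoss {n : ℕ} (pts pts' : Fin n → Fin n → ℕ) (i : Fin n) : Prop :=
  ∃ m, m ≠ i ∧ 1 ≤ pts i m ∧ pts' i m = 0 ∧ pts' m i = 3 ∧
    ∀ a b : Fin n, ¬ (a = i ∧ b = m) → ¬ (a = m ∧ b = i) → pts' a b = pts a b

def RankedAbove {n : ℕ} (pts : Fin n → Fin n → ℕ) (x y : Fin n) : Prop :=
  rrScore pts y < rrScore pts x ∨ (rrScore pts x = rrScore pts y ∧ x < y)

def transitiveRR (n : ℕ) (a b : Fin n) : ℕ := if a < b then 3 else 0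

def setLoss {n : ℕ} (pts : Fin n → Fin n → ℕ) (a b : Fin n) (x y : Fin n) : ℕ :=
  if x = a ∧ y = b then 0 else if x = b ∧ y = a then 3 else pts x y

section Ranking

variable {n : ℕ} {pts : Fin n → Fin n → ℕ}

theorem RankedAbove.irrefl (x : Fin n) : ¬ RankedAbove pts x x := by
  simp [RankedAbove]

theorem RankedAbove.asymm {x y : Fin n} (h : RankedAbove pts x y) : ¬ RankedAbove pts y x := by
  unfold RankedAbove at *
  have := Fin.lt_asymm (a := x) (b := y)
  omega

theorem RankedAbove.trans {x y z : Fin n} (hxy : RankedAbove pts x y) (hyz : RankedAbove pts y z) :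
    RankedAbove pts x z := by
  unfold RankedAbove at *
  have := Fin.lt_trans (a := x) (b := y) (c := z)
  omega

theorem rrRank_eq_one_add_card {i : Fin n} (s : Finset (Fin n))
    (h : ∀ x, RankedAbove pts x i ↔ x ∈ s) : rrRank pts i = 1 + #s := by
  unfold rrRank
  congr 2
  ext x
  simpa [RankedAbove] using h x

theorem rrRank_eq_one_and_eq_two {j k : Fin n} (hjk : RankedAbove pts j k)
    (hrest : ∀ x, x ≠ j → x ≠ k → RankedAbove pts k x) :
    rrRank pts j = 1 ∧ rrRank pts k = 2 := by
  constructor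
  · rw [rrRank_eq_one_add_card ∅, card_empty]
    intro x
    refine iff_of_false ?_ (notMem_empty x)
    by_cases hxj : x = j
    · exact hxj ▸ RankedAbove.irrefl x
    by_cases hxk : x = k
    · exact hxk ▸ hjk.asymm
    exact (hjk.trans (hrest x hxj hxk)).asymm
  · rw [rrRank_eq_one_add_card {j}, card_singleton]
    intro x
    by_cases hxj : x = j
    · exact iff_of_true (hxj ▸ hjk) (mem_singleton.2 hxj)
    refine iff_of_false ?_ (by simpa using hxj)
    by_cases hxk : x = k
    · exact hxk ▸ RankedAbove.irrefl x
    exact (hrest x hxj hxk).asymm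

theorem rrRank_last_of_forall_le {pts : Fin (n + 1) → Fin (n + 1) → ℕ}
    (h : ∀ x, rrScore pts (Fin.last n) ≤ rrScore pts x) : rrRank pts (Fin.last n) = n + 1 := by
  rw [rrRank_eq_one_add_card (univ.erase (Fin.last n)), card_erase_of_mem (mem_univ _),
    card_univ, Fintype.card_fin, Nat.add_sub_cancel, add_comm]
  intro x
  by_cases hx : x = Fin.last n
  · subst hx; simpa using RankedAbove.irrefl _
  have := h x
  simp only [RankedAbove, mem_erase, mem_univ, and_true, hx, ne_eq, not_false_eq_true, iff_true]
  have := Fin.lt_last_iff_ne_last.2 hx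
  omega

end Ranking

theorem validRR_transitiveRR (n : ℕ) : ValidRR (transitiveRR n) := by
  refine ⟨fun i => by simp [transitiveRR], fun i j hij => ?_⟩
  rcases lt_or_gt_of_ne hij with h | h
  · simp [transitiveRR, h, h.not_gt]
  · simp [transitiveRR, h, h.not_gt]

theorem rrScore_transitiveRR {n : ℕ} (a : Fin n) :
    rrScore (transitiveRR n) a = 3 * (n - 1 - a) := by
  simp [rrScore, transitiveRR, sum_ite, filter_lt_eq_Ioi, Fin.card_Ioi, mul_comm]

section SetLoss

variable {n : ℕ} {pts : Fin n → Fin n → ℕ} {a b : Fin n}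

theorem setLoss_apply_of_ne {x y : Fin n} (h₁ : ¬ (x = a ∧ y = b))
    (h₂ : ¬ (x = b ∧ y = a)) :
    setLoss pts a b x y = pts x y := by
  simp [setLoss, h₁, h₂]

theorem ValidRR.setLoss (h : ValidRR pts) (hab : a ≠ b) : ValidRR (setLoss pts a b) := by
  obtain ⟨hdiag, hmatch⟩ := h
  refine ⟨fun x => ?_, fun x y hxy => ?_⟩
  · rw [setLoss_apply_of_ne] <;> grind
  · have := hmatch x y hxy
    simp only [_root_.setLoss]
    split_ifs <;> grind

theorem rrScore_setLoss_loser (hab : a ≠ b) :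
    rrScore (setLoss pts a b) a + pts a b = rrScore pts a := by
  have hrow : setLoss pts a b a = Function.update (pts a) b 0 := by
    ext y; by_cases hy : y = b <;> simp [setLoss, hy, hab]
  rw [rrScore, rrScore, hrow, sum_update_of_mem (mem_univ b),
    sum_eq_add_sum_sdiff_singleton_of_mem (mem_univ b), zero_add, add_comm]

theorem rrScore_setLoss_winner (hab : a ≠ b) :
    rrScore (setLoss pts a b) b + pts b a = rrScore pts b + 3 := by
  have hrow : setLoss pts a b b = Function.update (pts b) a 3 := by
    ext y; by_cases hy : y = a <;> simp [setLoss, hy, hab.symm]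
  rw [rrScore, rrScore, hrow, sum_update_of_mem (mem_univ a),
    sum_eq_add_sum_sdiff_singleton_of_mem (mem_univ a)]
  ring

theorem rrScore_setLoss_of_ne {x : Fin n} (hxa : x ≠ a) (hxb : x ≠ b) :
    rrScore (setLoss pts a b) x = rrScore pts x :=
  sum_congr rfl fun y _ => setLoss_apply_of_ne (by tauto) (by tauto)

theorem deliberateLoss_setLoss (hba : b ≠ a) (h : 1 ≤ pts a b) :
    DeliberateLoss pts (setLoss pts a b) a :=
  ⟨b, hba, h, by simp [setLoss], by simp [setLoss, hba],
    fun _ _ h₁ h₂ => setLoss_apply_of_ne h₁ h₂⟩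

end SetLoss

section Kingmaker

variable (m : ℕ)

def kingmaker : Fin (m + 3) → Fin (m + 3) → ℕ :=
  setLoss (setLoss (transitiveRR (m + 3)) 0 1) 1 (Fin.last (m + 2))

theorem one_ne_last : (1 : Fin (m + 3)) ≠ Fin.last (m + 2) := Fin.one_lt_last.ne

theorem validRR_kingmaker : ValidRR (kingmaker m) :=
  ((validRR_transitiveRR _).setLoss zero_ne_one).setLoss (one_ne_last m)

theorem kingmaker_last_one : kingmaker m (Fin.last (m + 2)) 1 = 3 := by
  simp [kingmaker, setLoss, (one_ne_last m).symm]

theorem kingmaker_one_last : kingmaker m 1 (Fin.last (m + 2)) = 0 := by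
  simp [kingmaker, setLoss]

theorem rrScore_kingmaker_zero : rrScore (kingmaker m) 0 = 3 * (m + 1) := by
  have h := rrScore_setLoss_loser (pts := transitiveRR (m + 3)) (zero_ne_one (α := Fin (m + 3)))
  rw [kingmaker, rrScore_setLoss_of_ne zero_ne_one Fin.last_pos'.ne]
  simp [rrScore_transitiveRR, transitiveRR] at h
  omega

theorem rrScore_kingmaker_one : rrScore (kingmaker m) 1 = 3 * (m + 1) := by
  have h := rrScore_setLoss_winner (pts := transitiveRR (m + 3)) (zero_ne_one (α := Fin (m + 3)))
  have h' := rrScore_setLoss_loser (pts := setLoss (transitiveRR (m + 3)) 0 1) (one_ne_last m)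
  have hA : setLoss (transitiveRR (m + 3)) 0 1 1 (Fin.last (m + 2)) = 3 := by
    simp [setLoss, transitiveRR, Fin.one_lt_last]
  rw [hA] at h'
  simp [rrScore_transitiveRR, transitiveRR] at h
  rw [kingmaker]
  omega

theorem rrScore_kingmaker_last : rrScore (kingmaker m) (Fin.last (m + 2)) = 3 := by
  have h := rrScore_setLoss_winner (pts := setLoss (transitiveRR (m + 3)) 0 1) (one_ne_last m)
  have hA : setLoss (transitiveRR (m + 3)) 0 1 (Fin.last (m + 2)) 1 = 0 := by
    simp [setLoss, transitiveRR, (one_ne_last m).symm]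
  rw [hA, rrScore_setLoss_of_ne Fin.last_pos'.ne' (one_ne_last m).symm, rrScore_transitiveRR] at h
  rw [kingmaker]
  simpa using h

theorem rrScore_kingmaker_of_ne {x : Fin (m + 3)} (h0 : x ≠ 0) (h1 : x ≠ 1)
    (hl : x ≠ Fin.last (m + 2)) :
    3 ≤ rrScore (kingmaker m) x ∧ rrScore (kingmaker m) x < 3 * (m + 1) := by
  rw [kingmaker, rrScore_setLoss_of_ne h1 hl, rrScore_setLoss_of_ne h0 h1, rrScore_transitiveRR]
  simp only [ne_eq, Fin.ext_iff, Fin.val_zero, Fin.val_one, Fin.val_last] at h0 h1 hl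
  have := x.isLt
  omega

theorem rrRank_kingmaker_zero_one : rrRank (kingmaker m) 0 = 1 ∧ rrRank (kingmaker m) 1 = 2 := by
  have hzero_one : RankedAbove (kingmaker m) 0 1 :=
    Or.inr ⟨by rw [rrScore_kingmaker_zero, rrScore_kingmaker_one], zero_lt_one⟩
  refine rrRank_eq_one_and_eq_two hzero_one fun x h0 h1 => ?_
  by_cases hl : x = Fin.last (m + 2)
  · subst hl
    simp only [RankedAbove, rrScore_kingmaker_one, rrScore_kingmaker_last, Fin.lt_def, Fin.val_one,
      Fin.val_last]
    omega
  · exact Or.inl (rrScore_kingmaker_one m ▸ (rrScore_kingmaker_of_ne m h0 h1 hl).2)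

theorem rrRank_kingmaker_last : rrRank (kingmaker m) (Fin.last (m + 2)) = m + 3 := by
  refine rrRank_last_of_forall_le fun x => ?_
  rw [rrScore_kingmaker_last]
  by_cases h0 : x = 0
  · rw [h0, rrScore_kingmaker_zero]
    omega
  by_cases h1 : x = 1
  · rw [h1, rrScore_kingmaker_one]
    omega
  by_cases hl : x = Fin.last (m + 2)
  · rw [hl, rrScore_kingmaker_last]
  exact (rrScore_kingmaker_of_ne m h0 h1 hl).1

theorem rrScore_setLoss_kingmaker_last :
    rrScore (setLoss (kingmaker m) (Fin.last (m + 2)) 1) (Fin.last (m + 2)) = 0 := by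
  have h := rrScore_setLoss_loser (pts := kingmaker m) (one_ne_last m).symm
  rw [kingmaker_last_one, rrScore_kingmaker_last] at h
  omega

theorem rrRank_setLoss_kingmaker_one_zero :
    rrRank (setLoss (kingmaker m) (Fin.last (m + 2)) 1) 1 = 1 ∧
      rrRank (setLoss (kingmaker m) (Fin.last (m + 2)) 1) 0 = 2 := by
  have h1 : rrScore (setLoss (kingmaker m) (Fin.last (m + 2)) 1) 1 = 3 * (m + 2) := by
    have h := rrScore_setLoss_winner (pts := kingmaker m) (one_ne_last m).symm
    rw [kingmaker_one_last, rrScore_kingmaker_one] at h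
    omega
  have h0 : rrScore (setLoss (kingmaker m) (Fin.last (m + 2)) 1) 0 = 3 * (m + 1) := by
    rw [rrScore_setLoss_of_ne Fin.last_pos'.ne zero_ne_one, rrScore_kingmaker_zero]
  refine rrRank_eq_one_and_eq_two (Or.inl (by omega)) fun x hx1 hx0 => Or.inl ?_
  rw [h0]
  by_cases hl : x = Fin.last (m + 2)
  · rw [hl, rrScore_setLoss_kingmaker_last]
    omega
  · rw [rrScore_setLoss_of_ne hl hx1]
    exact (rrScore_kingmaker_of_ne m hx0 hx1 hl).2

theorem rrRank_setLoss_kingmaker_last :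
    rrRank (setLoss (kingmaker m) (Fin.last (m + 2)) 1) (Fin.last (m + 2)) = m + 3 :=
  rrRank_last_of_forall_le fun x => by
    rw [rrScore_setLoss_kingmaker_last]
    exact Nat.zero_le _

end Kingmaker

/-- in a round-robin tournament with at least three teams there
exist results `pts` and a team `i` such that `i` can deliberately lose one of its
matches, keep its own final rank unchanged, and thereby reverse the final ranks
of two teams `j`, `k` both ranked strictly above `i`. -/
theorem statement10 (n : ℕ) (hn : 3 ≤ n) :
    ∃ (pts pts' : Fin n → Fin n → ℕ) (i j k : Fin n),
      ValidRR pts ∧ ValidRR pts' ∧ DeliberateLoss pts pts' i ∧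
      rrRank pts' i = rrRank pts i ∧
      rrRank pts j < rrRank pts k ∧ rrRank pts k < rrRank pts i ∧
      rrRank pts' j = rrRank pts k ∧ rrRank pts' k = rrRank pts j := by
  obtain ⟨m, rfl⟩ : ∃ m, n = m + 3 := ⟨n - 3, by omega⟩
  obtain ⟨hj, hk⟩ := rrRank_kingmaker_zero_one m
  obtain ⟨hk', hj'⟩ := rrRank_setLoss_kingmaker_one_zero m
  refine ⟨kingmaker m, setLoss (kingmaker m) (Fin.last (m + 2)) 1, Fin.last (m + 2), 0, 1,
    validRR_kingmaker m, (validRR_kingmaker m).setLoss (one_ne_last m).symm,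
    deliberateLoss_setLoss (one_ne_last m) (by rw [kingmaker_last_one]; norm_num), ?_⟩
  rw [rrRank_kingmaker_last, rrRank_setLoss_kingmaker_last, hj, hk, hj', hk']
  omega
end
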